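/- arXiv:math/0603034 — 3 statements merged into one kernel-verified Lean document; each statement's English description precedes it below -/
import Mathlib

section
/- Let B be a commutative ring and f ∈ B[X] a monic polynomial of degree n ≥ 1. Let B' = B[X]/(f) and let x ∈ B' denote the class of X, so that B' is a free B-module with basis 1, x, …, x^{n−1}. Then there exist elements b₀, …, b_{n−1} ∈ B' such that for every y ∈ B' one has f'(x)·y = Σ_{i=0}^{n−1} Tr_{B'/B}(b_i·y)·x^i, where f' denotes the formal derivative of f and Tr_{B'/B}(z) denotes the trace of the B-linear endomorphism of the free B-module B' given by multiplication by z. -/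
open Polynomial

namespace TateAux

variable {B : Type*} [CommRing B]

/-- The "cofactor" polynomials: `q f i = ∑_{t < n - i} coeff f (i+1+t) • X^t`,
so that `f(Y) = (Y - x) * ∑ i (q f i)(x) Y^i` over `B[X]/(f)`. -/
noncomputable def q (f : B[X]) (i : ℕ) : B[X] :=
  ∑ t ∈ Finset.range (f.natDegree - i), C (f.coeff (i + 1 + t)) * X ^ t

lemma q_coeff (f : B[X]) (i d : ℕ) : (q f i).coeff d = f.coeff (i + 1 + d) := by
  rw [q, finset_sum_coeff]
  simp only [coeff_C_mul, coeff_X_pow, mul_ite, mul_one, mul_zero]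
  rw [Finset.sum_ite_eq (Finset.range _) d fun t => f.coeff (i + 1 + t)]
  split_ifs with h
  · rfl
  · rw [Finset.mem_range] at h
    exact (coeff_eq_zero_of_natDegree_lt (by omega)).symm

lemma q_mul_X_pow_succ (f : B[X]) (i : ℕ) :
    q f i * X ^ (i + 1) = f - ∑ k ∈ Finset.range (i + 1), C (f.coeff k) * X ^ k := by
  ext d
  rw [coeff_mul_X_pow', coeff_sub, finset_sum_coeff]
  simp only [coeff_C_mul, coeff_X_pow, mul_ite, mul_one, mul_zero]
  rw [Finset.sum_ite_eq (Finset.range _) d fun k => f.coeff k]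
  simp only [Finset.mem_range]
  split_ifs with h h2 h2
  · omega
  · rw [q_coeff, sub_zero]; congr 1; omega
  · rw [sub_self]
  · omega

lemma sum_q_mul_X_pow (f : B[X]) :
    ∑ i ∈ Finset.range f.natDegree, q f i * X ^ i = derivative f := by
  ext d
  rw [finset_sum_coeff, coeff_derivative]
  have h1 : ∀ i ∈ Finset.range f.natDegree,
      (q f i * X ^ i).coeff d = if i ∈ Finset.range (d + 1) then f.coeff (d + 1) else 0 := by
    intro i _
    rw [coeff_mul_X_pow']
    simp only [Finset.mem_range]
    split_ifs with h h2 h2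
    · rw [q_coeff]; congr 1; omega
    · omega
    · omega
    · rfl
  rw [Finset.sum_congr rfl h1, Finset.sum_ite_mem, Finset.sum_const]
  by_cases hd : d < f.natDegree
  · have : Finset.range f.natDegree ∩ Finset.range (d + 1) = Finset.range (d + 1) := by
      rw [Finset.inter_eq_right]
      exact Finset.range_subset_range.mpr (by omega)
    rw [this, Finset.card_range, nsmul_eq_mul, mul_comm]
    push_cast
    ring
  · have : f.coeff (d + 1) = 0 := coeff_eq_zero_of_natDegree_lt (by omega)
    simp [this]

end TateAux

namespace TateAux2
open TateAux AdjoinRoot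

variable {B : Type*} [CommRing B]

lemma r_coeff (f : B[X]) (i d : ℕ) :
    (∑ k ∈ Finset.range (i + 1), C (f.coeff k) * X ^ k).coeff d =
      if d < i + 1 then f.coeff d else 0 := by
  rw [finset_sum_coeff]
  simp only [coeff_C_mul, coeff_X_pow, mul_ite, mul_one, mul_zero]
  rw [Finset.sum_ite_eq (Finset.range _) d fun k => f.coeff k]
  simp [Finset.mem_range]

lemma mod_mk_pow [Nontrivial B] {f : B[X]} (hf : f.Monic) (j : ℕ) (hj : j < f.natDegree) :
    AdjoinRoot.modByMonicHom hf (AdjoinRoot.root f ^ j) = X ^ j := by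
  rw [← AdjoinRoot.mk_X, ← map_pow, AdjoinRoot.modByMonicHom_mk]
  apply (modByMonic_eq_self_iff hf).mpr
  rw [degree_eq_natDegree hf.ne_zero, degree_X_pow]
  exact_mod_cast hj

lemma key_delta [Nontrivial B] {f : B[X]} (hf : f.Monic) (i j : ℕ)
    (hi : i < f.natDegree) (hj : j < f.natDegree) :
    (AdjoinRoot.modByMonicHom hf
        (AdjoinRoot.mk f (q f i) * AdjoinRoot.root f ^ j)).coeff (f.natDegree - 1) =
      if i = j then 1 else 0 := by
  rw [← AdjoinRoot.mk_X, ← map_pow, ← map_mul, AdjoinRoot.modByMonicHom_mk]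
  by_cases hij : j ≤ i
  · have hdeg : (q f i * X ^ j).degree < f.degree := by
      rw [degree_eq_natDegree hf.ne_zero, degree_lt_iff_coeff_zero]
      intro m hm
      rw [coeff_mul_X_pow']
      split_ifs with h
      · rw [q_coeff]
        exact coeff_eq_zero_of_natDegree_lt (by omega)
      · rfl
    rw [(modByMonic_eq_self_iff hf).mpr hdeg, coeff_mul_X_pow', if_pos (by omega), q_coeff]
    by_cases h : i = j
    · subst h
      rw [if_pos rfl, show i + 1 + (f.natDegree - 1 - i) = f.natDegree by omega,
        hf.coeff_natDegree]
    · rw [if_neg h]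
      exact coeff_eq_zero_of_natDegree_lt (by omega)
  · have hsplit : q f i * X ^ j =
        f * X ^ (j - i - 1) -
          (∑ k ∈ Finset.range (i + 1), C (f.coeff k) * X ^ k) * X ^ (j - i - 1) := by
      rw [← sub_mul, ← q_mul_X_pow_succ, mul_assoc, ← pow_add]
      congr 2
      omega
    have h0 : (f * X ^ (j - i - 1)) %ₘ f = 0 :=
      (modByMonic_eq_zero_iff_dvd hf).mpr ⟨X ^ (j - i - 1), rfl⟩
    have hcz : ∀ m, f.natDegree - 1 ≤ m →
        ((∑ k ∈ Finset.range (i + 1), C (f.coeff k) * X ^ k) * X ^ (j - i - 1)).coeff m = 0 := by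
      intro m hm
      rw [coeff_mul_X_pow']
      split_ifs with h
      · rw [r_coeff, if_neg (by omega)]
      · rfl
    have hdeg : ((∑ k ∈ Finset.range (i + 1), C (f.coeff k) * X ^ k) * X ^ (j - i - 1)).degree
        < f.degree := by
      rw [degree_eq_natDegree hf.ne_zero]
      refine lt_of_lt_of_le ((degree_lt_iff_coeff_zero _ _).mpr fun m hm => hcz m hm) ?_
      exact_mod_cast Nat.sub_le f.natDegree 1
    rw [hsplit, sub_modByMonic, h0, zero_sub, coeff_neg,
      (modByMonic_eq_self_iff hf).mpr hdeg, hcz _ le_rfl, neg_zero, if_neg (by omega)]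

end TateAux2

/-- **Tate's trace formula.** Let `B` be a commutative ring and `f ∈ B[X]` a monic
polynomial of degree `n ≥ 1`.  Let `B' = B[X]/(f)` (realized as `AdjoinRoot f`) and let
`x ∈ B'` be the class of `X` (the root).  Then there exist `b₀, …, b_{n-1} ∈ B'` such
that for every `y ∈ B'` one has
`f'(x) · y = ∑_{i=0}^{n-1} Tr_{B'/B}(bᵢ · y) · xⁱ`,
where `f'` is the formal derivative and `Tr_{B'/B}` is the trace of the multiplication
endomorphism of the free `B`-module `B'`. -/
theorem tate_trace_formula (B : Type*) [CommRing B] (f : Polynomial B) (hf : f.Monic)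
    (n : ℕ) (hn : f.natDegree = n) (hn1 : 1 ≤ n) :
    ∃ b : Fin n → AdjoinRoot f, ∀ y : AdjoinRoot f,
      AdjoinRoot.mk f (Polynomial.derivative f) * y =
        ∑ i : Fin n,
          Algebra.trace B (AdjoinRoot f) (b i * y) • (AdjoinRoot.root f) ^ (i : ℕ) := by
  rcases subsingleton_or_nontrivial B with hB | hB
  · haveI : Subsingleton (AdjoinRoot f) := by
      have h10 : (0 : AdjoinRoot f) = 1 := by
        rw [← map_one (AdjoinRoot.mk f), ← map_zero (AdjoinRoot.mk f),
          Subsingleton.elim (0 : B[X]) 1]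
      exact subsingleton_of_zero_eq_one h10
    exact ⟨fun _ => 0, fun y => Subsingleton.elim _ _⟩
  subst hn
  classical
  set M := AdjoinRoot.modByMonicHom hf with hM
  set bb : Fin f.natDegree → AdjoinRoot f := fun i => AdjoinRoot.mk f (TateAux.q f i) with hbb
  set pb := AdjoinRoot.powerBasis' hf with hpb
  -- key coordinate identity
  have hkey : ∀ (i : Fin f.natDegree) (w : AdjoinRoot f),
      (M w).coeff (i : ℕ) = (M (bb i * w)).coeff (f.natDegree - 1) := by
    intro i
    have hLL : ((Polynomial.lcoeff B (i : ℕ)).comp M : AdjoinRoot f →ₗ[B] B) =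
        (Polynomial.lcoeff B (f.natDegree - 1)).comp (M.comp (LinearMap.mulLeft B (bb i))) := by
      apply pb.basis.ext
      intro j
      rw [pb.basis_eq_pow j]
      simp only [LinearMap.comp_apply, Polynomial.lcoeff_apply, LinearMap.mulLeft_apply]
      rw [show pb.gen = AdjoinRoot.root f from rfl]
      rw [hM, TateAux2.mod_mk_pow hf (j : ℕ) j.isLt, Polynomial.coeff_X_pow, hbb,
        TateAux2.key_delta hf (i : ℕ) (j : ℕ) i.isLt j.isLt]
    intro w
    exact LinearMap.congr_fun hLL w
  -- reconstruction formula
  have hA : ∀ w : AdjoinRoot f,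
      ∑ i : Fin f.natDegree,
        (M (bb i * w)).coeff (f.natDegree - 1) • AdjoinRoot.root f ^ (i : ℕ) = w := by
    intro w
    conv_rhs => rw [← pb.basis.sum_repr w]
    refine Finset.sum_congr rfl fun i _ => ?_
    rw [pb.basis_eq_pow i, ← hkey i w]
    rfl
  -- the sum of the bb's recovers the derivative
  have hg : ∑ i : Fin f.natDegree, bb i * AdjoinRoot.root f ^ (i : ℕ) =
      AdjoinRoot.mk f (Polynomial.derivative f) := by
    rw [← TateAux.sum_q_mul_X_pow f, map_sum, ← Fin.sum_univ_eq_sum_range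
      (fun i => AdjoinRoot.mk f (TateAux.q f i * Polynomial.X ^ i)) f.natDegree]
    refine Finset.sum_congr rfl fun i _ => ?_
    rw [hbb, map_mul, map_pow, AdjoinRoot.mk_X]
  -- trace formula
  have hTr : ∀ z : AdjoinRoot f, Algebra.trace B (AdjoinRoot f) z =
      (M (AdjoinRoot.mk f (Polynomial.derivative f) * z)).coeff (f.natDegree - 1) := by
    intro z
    rw [Algebra.trace_eq_matrix_trace pb.basis z, Matrix.trace]
    have : ∀ i : Fin f.natDegree,
        Matrix.diag (Algebra.leftMulMatrix pb.basis z) i =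
          (M (bb i * AdjoinRoot.root f ^ (i : ℕ) * z)).coeff (f.natDegree - 1) := by
      intro i
      erw [Matrix.diag_apply, Algebra.leftMulMatrix_eq_repr_mul]
      have : pb.basis.repr (z * pb.basis i) i = (M (z * pb.basis i)).coeff (i : ℕ) := rfl
      rw [this, hkey i, pb.basis_eq_pow i, show pb.gen = AdjoinRoot.root f from rfl]
      ring_nf
    erw [Finset.sum_congr rfl fun i _ => this i]
    change ∑ i : Fin f.natDegree, (M (bb i * AdjoinRoot.root f ^ (i : ℕ) * z)).coeff (f.natDegree - 1) = _
    have : ∀ i : Fin f.natDegree,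
        (M (bb i * AdjoinRoot.root f ^ (i : ℕ) * z)).coeff (f.natDegree - 1) =
          (Polynomial.lcoeff B (f.natDegree - 1)) (M (bb i * AdjoinRoot.root f ^ (i : ℕ) * z)) :=
      fun i => rfl
    rw [Finset.sum_congr rfl fun i _ => this i, ← map_sum, ← map_sum, ← Finset.sum_mul, hg]
    rfl
  refine ⟨bb, fun y => ?_⟩
  conv_lhs => rw [← hA (AdjoinRoot.mk f (Polynomial.derivative f) * y)]
  refine Finset.sum_congr rfl fun i _ => ?_
  congr 1
  rw [hTr]
  congr 1
  ring
end

section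
/- Let B be a commutative ring, C a commutative B-algebra, and let D = integralClosure B C be the integral closure of B in C. Let f ∈ B[X] be a monic polynomial of degree n ≥ 1, let C' = C[X]/(f) (where f is viewed in C[X] via the map B[X] → C[X]), and let x ∈ C' be the class of X. If y ∈ C' is integral over B, then there exist elements d₀, …, d_{n−1} ∈ D such that f'(x)·y = Σ_{i=0}^{n−1} d_i·x^i in C', where f' is the formal derivative of f and the d_i are viewed in C' via the canonical map C → C'. -/
open Polynomial

section Aux

variable {B : Type*} [CommRing B]

lemma mul_pow_eq_of_mul_eq {T : Type*} [CommRing T] {u a b : T} (h : u * a = u * b) :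
    ∀ m : ℕ, u * a ^ m = u * b ^ m
  | 0 => by rw [pow_zero, pow_zero]
  | m + 1 => by
    calc u * a ^ (m + 1) = (u * a) * a ^ m := by ring
    _ = (u * b) * a ^ m := by rw [h]
    _ = b * (u * a ^ m) := by ring
    _ = b * (u * b ^ m) := by rw [mul_pow_eq_of_mul_eq h m]
    _ = u * b ^ (m + 1) := by ring

lemma mul_aeval_eq {S T : Type*} [CommRing S] [CommRing T] [Algebra S T] {u a b : T}
    (h : u * a = u * b) (Q : S[X]) : u * aeval a Q = u * aeval b Q := by
  induction Q using Polynomial.induction_on' with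
  | add p q hp hq => rw [map_add, map_add, mul_add, mul_add, hp, hq]
  | monomial m c =>
    rw [aeval_monomial, aeval_monomial]
    calc u * (algebraMap S T c * a ^ m) = algebraMap S T c * (u * a ^ m) := by ring
    _ = algebraMap S T c * (u * b ^ m) := by rw [mul_pow_eq_of_mul_eq h m]
    _ = u * (algebraMap S T c * b ^ m) := by ring

lemma isIntegral_of_isRoot_of_coeff {S : Type*} [CommRing S] [Algebra B S] {p : S[X]}
    (hm : p.Monic) (hc : ∀ i, IsIntegral B (p.coeff i)) {x : S} (hx : p.eval x = 0) :
    IsIntegral B x := by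
  set A := integralClosure B S
  have hsub : (↑p.coeffs : Set S) ⊆ (A.toSubring : Set S) := by
    intro a ha
    rw [Finset.mem_coe, mem_coeffs_iff] at ha
    obtain ⟨i, _, rfl⟩ := ha
    exact hc i
  have hx' : IsIntegral A x := by
    refine ⟨p.toSubring A.toSubring hsub, (p.monic_toSubring _ _).mpr hm, ?_⟩
    have : (p.toSubring A.toSubring hsub).map (Subring.subtype A.toSubring) = p :=
      p.map_toSubring _ _
    rw [← eval_map]
    have h2 : (p.toSubring A.toSubring hsub).map (algebraMap A S) = p := this
    rw [h2, hx]
  exact isIntegral_trans x hx'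


lemma derivative_prod_X_sub_C {T : Type*} [CommRing T] {ι : Type*} [DecidableEq ι]
    (s : Finset ι) (r : ι → T) :
    derivative (∏ l ∈ s, (X - C (r l))) = ∑ k ∈ s, ∏ l ∈ s.erase k, (X - C (r l)) := by
  induction s using Finset.induction_on with
  | empty => simp
  | insert a s ha ih =>
    rw [Finset.prod_insert ha, derivative_mul, derivative_sub, derivative_X, derivative_C,
      sub_zero, one_mul, ih, Finset.mul_sum, Finset.sum_insert ha, Finset.erase_insert ha]
    congr 1
    refine Finset.sum_congr rfl fun k hk => ?_
    have hka : k ≠ a := fun h => ha (h ▸ hk)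
    rw [Finset.erase_insert_of_ne hka.symm, Finset.prod_insert (fun h => ha (Finset.erase_subset _ _ h))]

lemma coeff_prod_X_sub_C_mem {S : Type*} [CommRing S] [Algebra B S] {ι : Type*} [DecidableEq ι]
    (s : Finset ι) (r : ι → S) (hr : ∀ l ∈ s, IsIntegral B (r l)) (i : ℕ) :
    (∏ l ∈ s, (X - C (r l))).coeff i ∈ integralClosure B S := by
  induction s using Finset.induction_on generalizing i with
  | empty =>
    simp only [Finset.prod_empty, coeff_one]
    split <;> simp [Subalgebra.one_mem, Subalgebra.zero_mem]
  | insert a s ha ih =>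
    rw [Finset.prod_insert ha, coeff_mul]
    refine Subalgebra.sum_mem _ fun x _ => Subalgebra.mul_mem _ ?_
      (ih (fun l hl => hr l (Finset.mem_insert_of_mem hl)) _)
    have hai : r a ∈ integralClosure B S := hr a (Finset.mem_insert_self a s)
    rcases x.1 with (_ | _ | j) <;>
      simp [coeff_X, coeff_C, Subalgebra.zero_mem, Subalgebra.one_mem, Subalgebra.neg_mem, hai]

lemma adjoinRoot_of_injective {S : Type*} [CommRing S] {g : S[X]} (hg : g.Monic)
    (hdeg : 1 ≤ g.natDegree) : Function.Injective (AdjoinRoot.of g) := by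
  intro a b hab
  by_contra hne
  have h0 : Polynomial.C (a - b) ≠ 0 := Polynomial.C_ne_zero.mpr (sub_ne_zero.mpr hne)
  have := AdjoinRoot.mk_ne_zero_of_natDegree_lt hg h0 (by rw [natDegree_C]; omega)
  apply this
  rw [AdjoinRoot.mk_C, map_sub, hab, sub_self]

lemma isIntegral_of_algebraMap_isIntegral {C S : Type*} [CommRing C] [CommRing S]
    [Algebra B C] [Algebra C S] [Algebra B S] [IsScalarTower B C S]
    (hinj : Function.Injective (algebraMap C S)) {c : C}
    (h : IsIntegral B (algebraMap C S c)) : IsIntegral B c := by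
  obtain ⟨g, gm, hg⟩ := h
  refine ⟨g, gm, hinj ?_⟩
  rw [map_zero, ← hg, IsScalarTower.algebraMap_eq B C S, ← Polynomial.hom_eval₂]


lemma exists_splitting (B : Type u) [CommRing B] :
    ∀ (n : ℕ) (R : Type v) (_ : CommRing R) (_ : Algebra B R) (_ : Nontrivial R) (p : R[X]),
      p.Monic → p.natDegree = n → (∀ i, IsIntegral B (p.coeff i)) →
      ∃ (S : Type v) (_ : CommRing S) (_ : Algebra B S) (_ : Algebra R S)
        (_ : IsScalarTower B R S),
        Function.Injective (algebraMap R S) ∧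
        ∃ r : Fin n → S, p.map (algebraMap R S) = ∏ k, (X - C (r k)) ∧
          ∀ k, IsIntegral B (r k) := by
  intro n
  induction n with
  | zero =>
    intro R _ _ _ p hm hd _
    refine ⟨R, ‹_›, ‹_›, Algebra.id R, inferInstance, fun a b h => by simpa using h,
      finZeroElim, ?_, finZeroElim⟩
    have hp1 : p = 1 := hm.natDegree_eq_zero.mp hd
    simp [hp1]
  | succ n ih =>
    intro R _ _ _ p hm hd hint
    -- S₁ = AdjoinRoot p
    letI S₁ := AdjoinRoot p
    have hd1 : 1 ≤ p.natDegree := by omega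
    haveI : Nontrivial S₁ := by
      have hb := (AdjoinRoot.powerBasis' hm).basis.ne_zero ⟨0, by show 0 < p.natDegree; rw [hd]; omega⟩
      exact nontrivial_of_ne _ _ hb
    set r0 : S₁ := AdjoinRoot.root p with hr0def
    set pS : S₁[X] := p.map (algebraMap R S₁) with hpSdef
    have hpSm : pS.Monic := hm.map _
    have hpSd : pS.natDegree = n + 1 := by rw [hpSdef, hm.natDegree_map, hd]
    have hroot : pS.eval r0 = 0 := by
      rw [hpSdef, eval_map, AdjoinRoot.algebraMap_eq]
      exact AdjoinRoot.eval₂_root p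
    have hfac : (X - C r0) * (pS /ₘ (X - C r0)) = pS :=
      mul_divByMonic_eq_iff_isRoot.mpr hroot
    set q : S₁[X] := pS /ₘ (X - C r0) with hqdef
    have hqm : q.Monic := (monic_X_sub_C r0).of_mul_monic_left (hfac.symm ▸ hpSm)
    have hqd : q.natDegree = n := by
      have := (monic_X_sub_C r0).natDegree_mul hqm
      rw [hfac, hpSd, natDegree_X_sub_C] at this
      omega
    -- coefficients of pS are integral over B
    have hpScoeff : ∀ i, IsIntegral B (pS.coeff i) := by
      intro i
      rw [hpSdef, coeff_map]
      exact (hint i).map (IsScalarTower.toAlgHom B R S₁)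
    have hr0 : IsIntegral B r0 := isIntegral_of_isRoot_of_coeff hpSm hpScoeff hroot
    -- coefficients of q are integral over B
    have hqint : ∀ i, IsIntegral B (q.coeff i) := by
      set A := integralClosure B S₁
      have hsub : (↑pS.coeffs : Set S₁) ⊆ (A.toSubring : Set S₁) := by
        intro a ha
        rw [Finset.mem_coe, mem_coeffs_iff] at ha
        obtain ⟨i, _, rfl⟩ := ha
        exact hpScoeff i
      set P : A[X] := pS.toSubring A.toSubring hsub with hPdef
      have hPmap : P.map (algebraMap A S₁) = pS := by
        have h := pS.map_toSubring A.toSubring hsub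
        exact h
      set r0A : A := ⟨r0, hr0⟩ with hr0Adef
      have hmapdiv : (P /ₘ (X - C r0A)).map (algebraMap A S₁) = q := by
        rw [map_divByMonic (algebraMap A S₁) (monic_X_sub_C r0A), hPmap, hqdef,
          Polynomial.map_sub, map_X, map_C]
        rfl
      intro i
      have : q.coeff i = algebraMap A S₁ ((P /ₘ (X - C r0A)).coeff i) := by
        rw [← hmapdiv, coeff_map]
      rw [this]
      exact ((P /ₘ (X - C r0A)).coeff i).2
    obtain ⟨S, hCR, hBA, hS₁A, hTower, hinj1, r, hsplit, hrint⟩ :=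
      ih S₁ inferInstance inferInstance inferInstance q hqm hqd hqint
    letI : CommRing S := hCR
    letI : Algebra B S := hBA
    letI : Algebra S₁ S := hS₁A
    haveI : IsScalarTower B S₁ S := hTower
    letI : Algebra R S := ((algebraMap S₁ S).comp (algebraMap R S₁)).toAlgebra
    have halg : algebraMap R S = (algebraMap S₁ S).comp (algebraMap R S₁) :=
      RingHom.algebraMap_toAlgebra _
    haveI : IsScalarTower B R S := IsScalarTower.of_algebraMap_eq fun b => by
      rw [halg, RingHom.comp_apply, ← IsScalarTower.algebraMap_apply B R S₁,
        IsScalarTower.algebraMap_apply B S₁ S]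
    refine ⟨S, ‹_›, ‹_›, ‹_›, ‹_›, ?_, Fin.cons (algebraMap S₁ S r0) r, ?_, ?_⟩
    · rw [halg]
      exact hinj1.comp (by
        rw [AdjoinRoot.algebraMap_eq]
        exact adjoinRoot_of_injective hm hd1)
    · rw [halg, ← Polynomial.map_map, ← hpSdef, ← hfac, Polynomial.map_mul,
        Polynomial.map_sub, map_X, map_C, hsplit]
      simp [Fin.prod_univ_succ, Fin.cons_zero, Fin.cons_succ]
    · intro k
      refine Fin.cases ?_ ?_ k
      · simpa using hr0.map (IsScalarTower.toAlgHom B S₁ S)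
      · intro j
        simpa using hrint j

end Aux

lemma aeval_self_eq_eval {S : Type*} [CommRing S] (x : S) (Q : S[X]) :
    Polynomial.aeval x Q = Q.eval x := by
  rw [aeval_def, Algebra.algebraMap_self]
  rfl

lemma main_aux (B C : Type*) [CommRing B] [CommRing C] [Algebra B C] [Nontrivial C]
    (n : ℕ) (hn1 : 1 ≤ n) (fC : C[X]) (hfCm : fC.Monic) (hfCd : fC.natDegree = n)
    (hfCint : ∀ i, IsIntegral B (fC.coeff i))
    (y : AdjoinRoot fC) (hy : IsIntegral B y) :
    ∃ d : Fin n → integralClosure B C,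
      AdjoinRoot.mk fC (Polynomial.derivative fC) * y =
        ∑ i : Fin n,
          algebraMap C (AdjoinRoot fC) (d i : C) * (AdjoinRoot.root fC) ^ (i : ℕ) := by
  obtain ⟨S, hCR, hBA, hCA, hTower, hinj, r, hsplit, hrint⟩ :=
    exists_splitting B n C inferInstance inferInstance inferInstance fC hfCm hfCd hfCint
  letI : CommRing S := hCR
  letI : Algebra B S := hBA
  letI : Algebra C S := hCA
  haveI : IsScalarTower B C S := hTower
  haveI : Nontrivial S :=
    nontrivial_of_ne (algebraMap C S 0) (algebraMap C S 1)
      (fun h => zero_ne_one (hinj h))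
  obtain ⟨fS, hfSdef⟩ : ∃ fS : S[X], fS = fC.map (algebraMap C S) := ⟨_, rfl⟩
  rw [← hfSdef] at hsplit
  have hfSm : fS.Monic := hfSdef ▸ hfCm.map _
  have hfSd : fS.natDegree = n := by rw [hfSdef, hfCm.natDegree_map, hfCd]
  obtain ⟨ξ, hξdef⟩ : ∃ ξ : AdjoinRoot fS, ξ = AdjoinRoot.root fS := ⟨_, rfl⟩
  -- the canonical map Φ : C[X]/(f) → S[X]/(f)
  have hev : fC.eval₂ ((AdjoinRoot.of fS).comp (algebraMap C S)) ξ = 0 := by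
    rw [← Polynomial.eval₂_map, ← hfSdef, hξdef]
    exact AdjoinRoot.eval₂_root fS
  obtain ⟨Φ, hΦdef⟩ : ∃ Φ : AdjoinRoot fC →+* AdjoinRoot fS,
      Φ = AdjoinRoot.lift ((AdjoinRoot.of fS).comp (algebraMap C S)) ξ hev := ⟨_, rfl⟩
  have hΦx : Φ (AdjoinRoot.root fC) = ξ := by rw [hΦdef]; exact AdjoinRoot.lift_root hev
  have hΦof : ∀ c : C, Φ (AdjoinRoot.of fC c) = AdjoinRoot.of fS (algebraMap C S c) := by
    intro c; rw [hΦdef]; exact AdjoinRoot.lift_of hev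
  have hΦmk : ∀ P : C[X], Φ (AdjoinRoot.mk fC P) =
      P.eval₂ ((AdjoinRoot.of fS).comp (algebraMap C S)) ξ := by
    intro P; rw [hΦdef]; exact AdjoinRoot.lift_mk hev P
  have hΦalg : ∀ b : B, Φ (algebraMap B (AdjoinRoot fC) b) = algebraMap B (AdjoinRoot fS) b := by
    intro b
    rw [IsScalarTower.algebraMap_apply B C (AdjoinRoot fC), AdjoinRoot.algebraMap_eq, hΦof,
      IsScalarTower.algebraMap_apply B S (AdjoinRoot fS), AdjoinRoot.algebraMap_eq,
      ← IsScalarTower.algebraMap_apply B C S]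
  have hη : IsIntegral B (Φ y) := by
    have h : (⟨Φ, hΦalg⟩ : AdjoinRoot fC →ₐ[B] AdjoinRoot fS) y = Φ y := rfl
    exact h ▸ hy.map (⟨Φ, hΦalg⟩ : AdjoinRoot fC →ₐ[B] AdjoinRoot fS)
  -- evaluation maps at the roots
  have hevk : ∀ k : Fin n, fS.eval₂ (RingHom.id S) (r k) = 0 := by
    intro k
    show fS.eval (r k) = 0
    rw [hsplit, eval_prod]
    exact Finset.prod_eq_zero (Finset.mem_univ k) (by simp)
  obtain ⟨ev, hevdef⟩ : ∃ ev : Fin n → (AdjoinRoot fS →+* S),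
      ev = fun k => AdjoinRoot.lift (RingHom.id S) (r k) (hevk k) := ⟨_, rfl⟩
  have hevalg : ∀ (k : Fin n) (b : B),
      ev k (algebraMap B (AdjoinRoot fS) b) = algebraMap B S b := by
    intro k b
    rw [IsScalarTower.algebraMap_apply B S (AdjoinRoot fS), AdjoinRoot.algebraMap_eq, hevdef]
    exact AdjoinRoot.lift_of (hevk k)
  obtain ⟨c, hcdef⟩ : ∃ c : Fin n → S, c = fun k => ev k (Φ y) := ⟨_, rfl⟩
  have hc : ∀ k, IsIntegral B (c k) := by
    intro k
    have h : (⟨ev k, hevalg k⟩ : AdjoinRoot fS →ₐ[B] S) (Φ y) = ev k (Φ y) := rfl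
    rw [hcdef]
    show IsIntegral B (ev k (Φ y))
    exact h ▸ hη.map (⟨ev k, hevalg k⟩ : AdjoinRoot fS →ₐ[B] S)
  -- the cofactor polynomials
  obtain ⟨g, hgdef⟩ : ∃ g : Fin n → S[X],
      g = fun k => ∏ l ∈ Finset.univ.erase k, (X - Polynomial.C (r l)) := ⟨_, rfl⟩
  have hgd : ∀ k, (g k).natDegree < n := by
    intro k
    have h1 : (g k).natDegree = ∑ l ∈ Finset.univ.erase k, (X - Polynomial.C (r l)).natDegree := by
      simp only [hgdef]
      exact natDegree_prod_of_monic _ _ (fun l _ => monic_X_sub_C _)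
    rw [h1]
    simp only [natDegree_X_sub_C, Finset.sum_const, smul_eq_mul, mul_one,
      Finset.card_erase_of_mem (Finset.mem_univ k), Finset.card_univ, Fintype.card_fin]
    omega
  have hπprod : ∀ k, (aeval ξ (g k)) * (ξ - algebraMap S (AdjoinRoot fS) (r k)) = 0 := by
    intro k
    have hexp : aeval ξ (g k) = ∏ l ∈ Finset.univ.erase k,
        (ξ - algebraMap S (AdjoinRoot fS) (r l)) := by
      simp only [hgdef]
      rw [map_prod]
      exact Finset.prod_congr rfl fun l _ => by rw [map_sub, aeval_X, aeval_C]
    rw [hexp, Finset.prod_erase_mul _ _ (Finset.mem_univ k)]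
    have h5 : aeval ξ fS = ∏ l : Fin n, (ξ - algebraMap S (AdjoinRoot fS) (r l)) :=
      (congrArg (aeval ξ) hsplit).trans (by
        rw [map_prod]
        exact Finset.prod_congr rfl fun l _ => by rw [map_sub, aeval_X, aeval_C])
    rw [← h5, hξdef, AdjoinRoot.aeval_eq, AdjoinRoot.mk_self]
  have hπmul : ∀ k, aeval ξ (g k) * ξ = aeval ξ (g k) * algebraMap S (AdjoinRoot fS) (r k) := by
    intro k
    have h := hπprod k
    rw [mul_sub, sub_eq_zero] at h
    exact h
  have hπz : ∀ k, aeval ξ (g k) * Φ y =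
      aeval ξ (g k) * algebraMap S (AdjoinRoot fS) (c k) := by
    intro k
    obtain ⟨Q, hQ⟩ := AdjoinRoot.mk_surjective (Φ y)
    have h1 : Φ y = aeval ξ Q := by rw [hξdef, AdjoinRoot.aeval_eq, hQ]
    have h2 : c k = Q.eval (r k) := by
      rw [hcdef]
      show ev k (Φ y) = _
      rw [← hQ, hevdef]
      show AdjoinRoot.lift (RingHom.id S) (r k) (hevk k) (AdjoinRoot.mk fS Q) = _
      rw [AdjoinRoot.lift_mk]
      rfl
    calc aeval ξ (g k) * Φ y = aeval ξ (g k) * aeval ξ Q := by rw [h1]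
    _ = aeval ξ (g k) * aeval (algebraMap S (AdjoinRoot fS) (r k)) Q :=
        mul_aeval_eq (hπmul k) Q
    _ = aeval ξ (g k) * algebraMap S (AdjoinRoot fS) (c k) := by
        rw [aeval_algebraMap_apply, aeval_self_eq_eval, h2]
  -- the derivative as a sum of cofactors
  have hD : aeval ξ (derivative fS) = ∑ k, aeval ξ (g k) := by
    have hder : derivative fS = ∑ k, g k := by
      rw [hsplit, derivative_prod_X_sub_C]
      exact Finset.sum_congr rfl fun k _ => by simp only [hgdef]
    rw [hder, map_sum]
  have hΦw : Φ (AdjoinRoot.mk fC (derivative fC) * y) = aeval ξ (derivative fS) * Φ y := by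
    rw [map_mul]
    congr 1
    rw [hΦmk, ← Polynomial.eval₂_map, ← derivative_map, ← hfSdef, aeval_def,
      AdjoinRoot.algebraMap_eq]
  obtain ⟨e, hedef⟩ : ∃ e : ℕ → S, e = fun i => ∑ k, c k * (g k).coeff i := ⟨_, rfl⟩
  have key : Φ (AdjoinRoot.mk fC (derivative fC) * y) =
      ∑ i ∈ Finset.range n, algebraMap S (AdjoinRoot fS) (e i) * ξ ^ i := by
    rw [hΦw, hD, Finset.sum_mul]
    have h1 : ∀ k, aeval ξ (g k) * Φ y =
        ∑ i ∈ Finset.range n, algebraMap S (AdjoinRoot fS) (c k * (g k).coeff i) * ξ ^ i := by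
      intro k
      rw [hπz k, aeval_eq_sum_range' (hgd k) ξ, Finset.sum_mul]
      refine Finset.sum_congr rfl fun i _ => ?_
      rw [Algebra.smul_def, map_mul]
      ring
    rw [Finset.sum_congr rfl (fun k _ => h1 k), Finset.sum_comm]
    refine Finset.sum_congr rfl fun i _ => ?_
    simp only [hedef]
    rw [map_sum, Finset.sum_mul]
  -- representation of the left-hand side over C
  obtain ⟨W, hW⟩ := AdjoinRoot.mk_surjective (AdjoinRoot.mk fC (derivative fC) * y)
  obtain ⟨W', hW'def⟩ : ∃ W' : C[X], W' = W %ₘ fC := ⟨_, rfl⟩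
  have hmkW : AdjoinRoot.mk fC W' = AdjoinRoot.mk fC W := by
    refine AdjoinRoot.mk_eq_mk.mpr ⟨-(W /ₘ fC), ?_⟩
    have h := modByMonic_add_div W fC
    rw [hW'def]
    linear_combination h
  have hdeg' : W'.natDegree < n := by
    rcases eq_or_ne W' 0 with h | h
    · rw [h]
      simp only [natDegree_zero]; omega
    · have h2 := degree_modByMonic_lt W hfCm
      rw [← hW'def] at h2
      have h3 := natDegree_lt_natDegree h h2
      omega
  have hwrep : AdjoinRoot.mk fC (derivative fC) * y =
      ∑ i ∈ Finset.range n, algebraMap C (AdjoinRoot fC) (W'.coeff i) *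
        (AdjoinRoot.root fC) ^ i := by
    rw [← hW, ← hmkW, ← AdjoinRoot.aeval_eq, aeval_eq_sum_range' hdeg']
    exact Finset.sum_congr rfl fun i _ => (Algebra.smul_def _ _)
  have hΦw2 : Φ (AdjoinRoot.mk fC (derivative fC) * y) =
      ∑ i ∈ Finset.range n,
        algebraMap S (AdjoinRoot fS) (algebraMap C S (W'.coeff i)) * ξ ^ i := by
    rw [hwrep, map_sum]
    refine Finset.sum_congr rfl fun i _ => ?_
    rw [map_mul, map_pow, hΦx, AdjoinRoot.algebraMap_eq, hΦof, AdjoinRoot.algebraMap_eq]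
  -- comparison of coefficients via the power basis of S[X]/(f)
  have hF0 : ∀ i, i < n → algebraMap C S (W'.coeff i) - e i = 0 := by
    set pbS := AdjoinRoot.powerBasis' hfSm with hpbSdef
    have hdim : pbS.dim = n := hfSd
    have hFsum : ∑ i ∈ Finset.range n, (algebraMap C S (W'.coeff i) - e i) • ξ ^ i = 0 := by
      have h := hΦw2.symm.trans key
      simp only [Algebra.smul_def, map_sub, sub_mul]
      rw [Finset.sum_sub_distrib, h, sub_self]
    have hli := pbS.basis.linearIndependent
    rw [Fintype.linearIndependent_iff] at hli
    have hgen : pbS.gen = AdjoinRoot.root fS := rfl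
    have hsum : ∑ i : Fin pbS.dim,
        (algebraMap C S (W'.coeff (i : ℕ)) - e (i : ℕ)) • pbS.basis i = 0 := by
      have hb : ∀ i : Fin pbS.dim, pbS.basis i = ξ ^ (i : ℕ) := by
        intro i
        rw [PowerBasis.coe_basis, hgen, hξdef]
      rw [Finset.sum_congr rfl fun i _ => by rw [hb i]]
      rw [Fin.sum_univ_eq_sum_range (fun j => (algebraMap C S (W'.coeff j) - e j) • ξ ^ j)
        pbS.dim, hdim]
      exact hFsum
    intro i hi
    exact hli (fun j => algebraMap C S (W'.coeff (j : ℕ)) - e (j : ℕ)) hsum ⟨i, hdim ▸ hi⟩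
  -- integrality of the coefficients
  have he : ∀ i, e i ∈ integralClosure B S := by
    intro i
    simp only [hedef, hgdef]
    exact Subalgebra.sum_mem _ fun k _ => Subalgebra.mul_mem _ (hc k)
      (coeff_prod_X_sub_C_mem _ _ (fun l _ => hrint l) i)
  have hWint : ∀ i : Fin n, IsIntegral B (W'.coeff i) := by
    intro i
    have h0 := hF0 i i.2
    rw [sub_eq_zero] at h0
    refine isIntegral_of_algebraMap_isIntegral hinj ?_
    rw [h0]
    exact he i
  refine ⟨fun i => ⟨W'.coeff i, hWint i⟩, ?_⟩
  rw [hwrep]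
  exact (Fin.sum_univ_eq_sum_range
    (fun j => algebraMap C (AdjoinRoot fC) (W'.coeff j) * (AdjoinRoot.root fC) ^ j) n).symm

/-- Let `B` be a commutative ring, `C` a commutative `B`-algebra, and
`D = integralClosure B C`.  Let `f ∈ B[X]` be monic of degree `n ≥ 1`, let
`C' = C[X]/(f)` (realized as `AdjoinRoot (f.map (algebraMap B C))`) with `x ∈ C'` the
class of `X`.  If `y ∈ C'` is integral over `B`, then there exist `d₀, …, d_{n-1} ∈ D`
such that `f'(x) · y = ∑_{i=0}^{n-1} dᵢ · xⁱ` in `C'`, where the `dᵢ` are viewed in `C'`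
via the canonical map `C → C'`. -/
theorem derivative_mul_integral_mem_span_of_integral
    (B C : Type*) [CommRing B] [CommRing C] [Algebra B C]
    (f : Polynomial B) (hf : f.Monic) (n : ℕ) (hn : f.natDegree = n) (hn1 : 1 ≤ n)
    (y : AdjoinRoot (f.map (algebraMap B C))) (hy : IsIntegral B y) :
    ∃ d : Fin n → integralClosure B C,
      AdjoinRoot.mk (f.map (algebraMap B C))
          (Polynomial.derivative (f.map (algebraMap B C))) * y =
        ∑ i : Fin n,
          algebraMap C (AdjoinRoot (f.map (algebraMap B C))) (d i : C) *
            (AdjoinRoot.root (f.map (algebraMap B C))) ^ (i : ℕ) := by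
  rcases subsingleton_or_nontrivial C with hC | hC
  · haveI : Subsingleton (AdjoinRoot (f.map (algebraMap B C))) := Module.subsingleton C _
    exact ⟨fun _ => 0, Subsingleton.elim _ _⟩
  refine main_aux B C n hn1 (f.map (algebraMap B C)) (hf.map _)
    (by rw [hf.natDegree_map, hn]) (fun i => ?_) y hy
  rw [coeff_map]
  exact isIntegral_algebraMap
end

section
/- Let R be a commutative ring, let M and N be R-modules with N finitely generated, and let φ : M → N be an R-linear map. Then the set of prime ideals p of R such that the induced map of fibers M ⊗_R κ(p) → N ⊗_R κ(p) is surjective (where κ(p) denotes the residue field of R at p) is an open subset of the prime spectrum of R with the Zariski topology. Equivalently, the set of primes p at which the localized map M_p → N_p is surjective is open. -/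
theorem setOf_localizedMap_surjective_eq_compl_support_coker {R M N : Type*} [CommRing R]
    [AddCommGroup M] [Module R M] [AddCommGroup N] [Module R N] (φ : M →ₗ[R] N) :
    {p : PrimeSpectrum R | Function.Surjective (LocalizedModule.map p.asIdeal.primeCompl φ)} =
      (Module.support R (N ⧸ LinearMap.range φ))ᶜ := by
  ext p
  simp only [Set.mem_ofPred_eq, Set.mem_compl_iff, Module.notMem_support_iff,
    φ.localizedMap_surjective_iff_subsingleton_localized_coker]

/-- Let `R` be a commutative ring, `M` and `N` `R`-modules with `N` finitely generated,
and `φ : M → N` an `R`-linear map.  Then the set of primes `p` of `R` at which the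
localized map `M_p → N_p` is surjective (equivalently, by Nakayama, the induced map of
fibers `M ⊗ κ(p) → N ⊗ κ(p)` is surjective) is open in `Spec R`. -/
theorem isOpen_locus_surjective_localized_map
    (R M N : Type*) [CommRing R] [AddCommGroup M] [Module R M]
    [AddCommGroup N] [Module R N] [Module.Finite R N] (φ : M →ₗ[R] N) :
    IsOpen {p : PrimeSpectrum R |
      Function.Surjective (LocalizedModule.map p.asIdeal.primeCompl φ)} := by
  rw [setOf_localizedMap_surjective_eq_compl_support_coker]
  exact Module.isClosed_support.isOpen_compl
end
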